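/- arXiv:1509.01595 — 2 statements merged into one kernel-verified Lean document; each statement's English description precedes it below -/
import Mathlib

section
/- For the set M = {u, r_α(u), r_{−α}(u), r_β(u), r_{−β}(u), r_α(u)−r_β(u), r_{−α}(u)−r_{−β}(u)} with α = arccos(1/(2√3)) − π/6, β = α + π/3, the vector graph V_M (vertices = ℤ-span of M, x ~ y iff x − y ∈ M or y − x ∈ M) satisfies χ(V_M) ≤ 4. -/
noncomputable def rot (θ : ℝ) (u : ℂ) : ℂ := Complex.exp (θ * Complex.I) * u
noncomputable def angA : ℝ := Real.arccos (1 / (2 * Real.sqrt 3)) - Real.pi / 6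
noncomputable def angB : ℝ := angA + Real.pi / 3

noncomputable def Mset (u : ℂ) : Set ℂ :=
  {u, rot angA u, rot (-angA) u, rot angB u, rot (-angB) u,
   rot angA u - rot angB u, rot (-angA) u - rot (-angB) u}

noncomputable def VM (u : ℂ) : SimpleGraph (Submodule.span ℤ (Mset u)) :=
  SimpleGraph.fromRel (fun x y => (x : ℂ) - (y : ℂ) ∈ Mset u)

/-! Write `v₁, v₂, v₃, v₄` for `r_α u, r_{-α} u, r_β u, r_{-β} u` and
`φ = arccos (1 / (2√3))`, so that `α = φ - π/6` and `β = φ + π/6`. Then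
`cos α + cos β = √3 cos φ = 1/2`, whence `u = v₁ + v₂ + v₃ + v₄` and every element of `M` has
integer coordinates in the `vᵢ`. Because `2√3 cos φ = 1` and `6 sin φ = √33`, an integer
relation among the `vᵢ` splits into relations `a + b√33 = 0` with `a, b ∈ ℤ`, so the `vᵢ` are
`ℤ`-linearly independent by irrationality of `√33`. Hence
`∑ nᵢ vᵢ ↦ n₁ + 3n₂ + 2n₃ + n₄ mod 4` is a well-defined additive map on the lattice; it does
not vanish on `M`, so it is a proper colouring of the graph. -/

open Complex Real Submodule

lemma Irrational.intCast_add_intCast_mul_eq_zero {x : ℝ} (hx : Irrational x) {a b : ℤ}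
    (h : (a : ℝ) + b * x = 0) : a = 0 ∧ b = 0 := by
  obtain rfl : b = 0 := by
    by_contra hb
    exact ((hx.intCast_mul hb).intCast_add a).ne_zero h
  simpa using h

lemma irrational_sqrt_33 : Irrational √33 := by
  have : ¬IsSquare 33 := fun ⟨r, hr⟩ ↦
    Nat.not_exists_sq (m := 5) (by norm_num) (by norm_num) ⟨r, hr.symm⟩
  simpa using irrational_sqrt_natCast_iff.mpr this

local notation "φ" => Real.arccos (1 / (2 * √3))

lemma two_mul_sqrt_three_mul_cos_arccos : 2 * √3 * Real.cos φ = 1 := by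
  have h3 : 0 < √3 := by positivity
  rw [Real.cos_arccos (by linarith [show 0 < 1 / (2 * √3) by positivity])]
  · field_simp
  · rw [div_le_one (by positivity)]
    nlinarith [Real.sq_sqrt (show (0 : ℝ) ≤ 3 by norm_num)]

lemma six_mul_sin_arccos : 6 * Real.sin φ = √33 := by
  have hsq : (6 * Real.sin φ) ^ 2 = 33 := by
    have h3 := Real.sq_sqrt (show (0 : ℝ) ≤ 3 by norm_num)
    nlinarith [Real.sin_sq_add_cos_sq φ, two_mul_sqrt_three_mul_cos_arccos]
  have hsin : 0 ≤ Real.sin φ :=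
    Real.sin_nonneg_of_nonneg_of_le_pi (Real.arccos_nonneg _) (Real.arccos_le_pi _)
  rw [← hsq, Real.sqrt_sq (by positivity)]

lemma angB_eq : angB = φ + π / 6 := by rw [angB, angA]; ring

lemma cos_angA_add_cos_angB : Real.cos angA + Real.cos angB = 1 / 2 := by
  rw [angB_eq, angA, Real.cos_sub, Real.cos_add, Real.cos_pi_div_six, Real.sin_pi_div_six]
  linear_combination two_mul_sqrt_three_mul_cos_arccos / 2

lemma eq_zero_of_intCast_mul_cos_angA_add_mul_cos_angB (s t : ℤ)
    (h : s * Real.cos angA + t * Real.cos angB = 0) : s = 0 ∧ t = 0 := by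
  rw [angB_eq, angA, Real.cos_sub, Real.cos_add, Real.cos_pi_div_six, Real.sin_pi_div_six] at h
  have key : ((3 * (s + t) : ℤ) : ℝ) + ((s - t : ℤ) : ℝ) * √33 = 0 := by
    push_cast
    linear_combination 12 * h - 3 * (s + t) * two_mul_sqrt_three_mul_cos_arccos
      - (s - t) * six_mul_sin_arccos
  have := irrational_sqrt_33.intCast_add_intCast_mul_eq_zero key
  omega

lemma eq_zero_of_intCast_mul_sin_angA_add_mul_sin_angB (p q : ℤ)
    (h : p * Real.sin angA + q * Real.sin angB = 0) : p = 0 ∧ q = 0 := by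
  rw [angB_eq, angA, Real.sin_sub, Real.sin_add, Real.cos_pi_div_six, Real.sin_pi_div_six] at h
  have key : ((q - p : ℤ) : ℝ) + ((p + q : ℤ) : ℝ) * √33 = 0 := by
    push_cast
    linear_combination 4 * √3 * h - (q - p) * two_mul_sqrt_three_mul_cos_arccos
      - (p + q) * six_mul_sin_arccos
      - 2 * (p + q) * Real.sin φ * Real.sq_sqrt (show (0 : ℝ) ≤ 3 by norm_num)
  have := irrational_sqrt_33.intCast_add_intCast_mul_eq_zero key
  omega

lemma linearIndependent_exp_mul_I {α β : ℝ}
    (hcos : ∀ s t : ℤ, s * Real.cos α + t * Real.cos β = 0 → s = 0 ∧ t = 0)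
    (hsin : ∀ p q : ℤ, p * Real.sin α + q * Real.sin β = 0 → p = 0 ∧ q = 0) :
    LinearIndependent ℤ fun i ↦ exp (↑(![α, -α, β, -β] i) * I) := by
  rw [Fintype.linearIndependent_iff]
  intro g hg
  rw [Fin.sum_univ_four] at hg
  have hre := congrArg Complex.re hg
  have him := congrArg Complex.im hg
  simp only [zsmul_eq_mul, add_re, add_im, mul_re, mul_im, intCast_re, intCast_im,
    exp_ofReal_mul_I_re, exp_ofReal_mul_I_im, zero_re, zero_im, Matrix.cons_val,
    Real.cos_neg, Real.sin_neg, zero_mul, sub_zero, add_zero] at hre him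
  obtain ⟨h01, h23⟩ := hcos (g 0 + g 1) (g 2 + g 3) (by push_cast; linarith)
  obtain ⟨h01', h23'⟩ := hsin (g 0 - g 1) (g 2 - g 3) (by push_cast; linarith)
  intro i
  fin_cases i <;> simp <;> omega

lemma linearIndependent_rot {ι : Type*} {θ : ι → ℝ} {u : ℂ} (hu : u ≠ 0)
    (h : LinearIndependent ℤ fun i ↦ exp (θ i * I)) :
    LinearIndependent ℤ fun i ↦ rot (θ i) u :=
  h.map' (LinearMap.mulRight ℤ u) (LinearMap.ker_eq_bot.mpr (mul_left_injective₀ hu))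

noncomputable def gens (u : ℂ) : Fin 4 → ℂ := fun i ↦ rot (![angA, -angA, angB, -angB] i) u

lemma linearIndependent_gens {u : ℂ} (hu : u ≠ 0) : LinearIndependent ℤ (gens u) :=
  linearIndependent_rot hu <| linearIndependent_exp_mul_I
    eq_zero_of_intCast_mul_cos_angA_add_mul_cos_angB
    eq_zero_of_intCast_mul_sin_angA_add_mul_sin_angB

lemma sum_gens (u : ℂ) : ∑ i, gens u i = u := by
  have key :
      (exp (angA * I) + exp (↑(-angA) * I)) + (exp (angB * I) + exp (↑(-angB) * I)) = 1 := by
    push_cast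
    rw [← two_cos, ← two_cos, ← ofReal_cos, ← ofReal_cos]
    norm_cast
    linear_combination 2 * cos_angA_add_cos_angB
  simp only [Fin.sum_univ_four, gens, rot, Matrix.cons_val]
  linear_combination u * key

lemma LinearIndependent.exists_linearMap_span {ι R M N : Type*} [Fintype ι] [CommRing R]
    [AddCommGroup M] [Module R M] [AddCommGroup N] [Module R N] {v : ι → M}
    (hv : LinearIndependent R v) (c : ι → N) :
    ∃ F : span R (Set.range v) →ₗ[R] N,
      ∀ (x : span R (Set.range v)) (n : ι → R),
        (x : M) = ∑ i, n i • v i → F x = ∑ i, n i • c i := by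
  refine ⟨(Module.Basis.span hv).constr R c, fun x n hx ↦ ?_⟩
  obtain rfl : x = ∑ i, n i • Module.Basis.span hv i :=
    Subtype.ext (by simp [hx, Module.Basis.span_apply])
  simp only [map_sum, map_smul, Module.Basis.constr_basis]

lemma SimpleGraph.colorable_fromRel_sub {V G : Type*} [AddGroup V] [AddGroup G] [Fintype G]
    (P : V → Prop) (f : V →+ G) (hf : ∀ v, P v → f v ≠ 0) :
    (SimpleGraph.fromRel fun x y ↦ P (x - y)).Colorable (Fintype.card G) := by
  refine (SimpleGraph.Coloring.mk f fun {x y} hxy hfxy ↦ ?_).colorable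
  rw [SimpleGraph.fromRel_adj] at hxy
  rcases hxy.2 with h | h <;> exact hf _ h (by rw [map_sub, hfxy, sub_self])

def Mcoords : Finset (Fin 4 → ℤ) :=
  {![1, 1, 1, 1], ![1, 0, 0, 0], ![0, 1, 0, 0], ![0, 0, 1, 0], ![0, 0, 0, 1],
   ![1, 0, -1, 0], ![0, 1, 0, -1]}

def colorWeights : Fin 4 → ZMod 4 := ![1, 3, 2, 1]

lemma sum_smul_colorWeights_ne_zero : ∀ n ∈ Mcoords, ∑ i, n i • colorWeights i ≠ 0 := by
  decide

lemma exists_mem_Mcoords_of_mem_Mset {u z : ℂ} (hz : z ∈ Mset u) :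
    ∃ n ∈ Mcoords, z = ∑ i, n i • gens u i := by
  rcases hz with rfl | rfl | rfl | rfl | rfl | rfl | rfl
  · refine ⟨![1, 1, 1, 1], by simp [Mcoords], ?_⟩
    conv_lhs => rw [← sum_gens z]
    simp [Fin.sum_univ_four]
  · exact ⟨![1, 0, 0, 0], by simp [Mcoords], by simp [Fin.sum_univ_four, gens]⟩
  · exact ⟨![0, 1, 0, 0], by simp [Mcoords], by simp [Fin.sum_univ_four, gens]⟩
  · exact ⟨![0, 0, 1, 0], by simp [Mcoords], by simp [Fin.sum_univ_four, gens]⟩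
  · exact ⟨![0, 0, 0, 1], by simp [Mcoords], by simp [Fin.sum_univ_four, gens]⟩
  · exact ⟨![1, 0, -1, 0], by simp [Mcoords],
      by simp [Fin.sum_univ_four, gens, sub_eq_add_neg]⟩
  · exact ⟨![0, 1, 0, -1], by simp [Mcoords],
      by simp [Fin.sum_univ_four, gens, sub_eq_add_neg]⟩

lemma Mset_subset_span_gens (u : ℂ) : Mset u ⊆ span ℤ (Set.range (gens u)) := by
  intro z hz
  obtain ⟨n, -, rfl⟩ := exists_mem_Mcoords_of_mem_Mset hz
  exact sum_mem fun i _ ↦ smul_mem _ _ (subset_span ⟨i, rfl⟩)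

theorem stmt10 (u : ℂ) (hu : ‖u‖ = 1) : (VM u).chromaticNumber ≤ 4 := by
  have hu0 : u ≠ 0 := norm_ne_zero_iff.mp (by simp [hu])
  obtain ⟨F, hF⟩ := (linearIndependent_gens hu0).exists_linearMap_span colorWeights
  let f := (F ∘ₗ inclusion (span_le.mpr (Mset_subset_span_gens u))).toAddMonoidHom
  have hf : ∀ v, ((v : span ℤ (Mset u)) : ℂ) ∈ Mset u → f v ≠ 0 := by
    intro v hv
    obtain ⟨n, hn, hvn⟩ := exists_mem_Mcoords_of_mem_Mset hv
    rw [LinearMap.toAddMonoidHom_coe, LinearMap.comp_apply, hF _ n hvn]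
    exact sum_smul_colorWeights_ne_zero n hn
  have h4 := (SimpleGraph.colorable_fromRel_sub _ f hf).chromaticNumber_le
  rw [ZMod.card] at h4
  exact h4
end

section
/- Every edge of the vector graph V_M joins two points at Euclidean distance exactly 1; i.e., V_M is a unit-distance graph in the plane. -/
/-! Every element of `Mset u` is a rotation of `u`, hence has norm `‖u‖`. For the two
differences this holds because `0`, `rot θ u`, `rot (θ + π/3) u` form an equilateral triangle,
so that `rot θ u - rot (θ + π/3) u = rot (θ - π/3) u`. -/

lemma norm_rot (θ : ℝ) (u : ℂ) : ‖rot θ u‖ = ‖u‖ := by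
  simp [rot, Complex.norm_exp_ofReal_mul_I]

lemma rot_sub_rot_add_pi_div_three (θ : ℝ) (u : ℂ) :
    rot θ u - rot (θ + Real.pi / 3) u = rot (θ - Real.pi / 3) u := by
  -- `e^{i(θ + π/3)} + e^{i(θ - π/3)} = 2 cos (π/3) e^{iθ} = e^{iθ}`
  have hcos : Complex.cos (Real.pi / 3 : ℝ) = 1 / 2 := by
    rw [← Complex.ofReal_cos, Real.cos_pi_div_three]; norm_num
  have hsum : Complex.exp ((θ + Real.pi / 3 : ℝ) * Complex.I)
      + Complex.exp ((θ - Real.pi / 3 : ℝ) * Complex.I) = Complex.exp (θ * Complex.I) :=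
    calc _ = Complex.exp (θ * Complex.I) * (Complex.exp ((Real.pi / 3 : ℝ) * Complex.I)
          + Complex.exp (-(Real.pi / 3 : ℝ) * Complex.I)) := by
          rw [mul_add, ← Complex.exp_add, ← Complex.exp_add]; push_cast; ring_nf
      _ = _ := by rw [← Complex.two_cos, hcos]; norm_num
  simp only [rot]
  linear_combination (-u) * hsum

lemma norm_of_mem_Mset {u v : ℂ} (hv : v ∈ Mset u) : ‖v‖ = ‖u‖ := by
  rcases hv with rfl | rfl | rfl | rfl | rfl | rfl | rfl
  · rfl
  iterate 4 exact norm_rot _ _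
  · rw [angB, rot_sub_rot_add_pi_div_three, norm_rot]
  · have h := rot_sub_rot_add_pi_div_three (-angB) u
    rw [show -angB + Real.pi / 3 = -angA by simp [angB]] at h
    rw [norm_sub_rev, h, norm_rot]

theorem stmt13 (u : ℂ) (hu : ‖u‖ = 1) (x y : Submodule.span ℤ (Mset u))
    (h : (VM u).Adj x y) : ‖(x : ℂ) - (y : ℂ)‖ = 1 := by
  rcases h with ⟨-, hxy | hyx⟩
  · rw [norm_of_mem_Mset hxy, hu]
  · rw [norm_sub_rev, norm_of_mem_Mset hyx, hu]
end
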